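/- arXiv:2605.22365 — 2 statements merged into one kernel-verified Lean document; each statement's English description precedes it below -/
import Mathlib

section
/- Let $K(\mathbf{u},\mathbf{v}) = \exp(-\gamma\|\mathbf{u}-\mathbf{v}\|_2^2)$ with $\gamma > 0$. Fix a test point $\mathbf{x} \in \mathbb{R}^d$, poisoned points $\mathbf{x}'_1,\dots,\mathbf{x}'_{N_p} \in \mathbb{R}^d$ with labels $T(\mathbf{x}'_j) \in \mathbb{R}^m$, and background points $\mathbf{x}_1,\dots,\mathbf{x}_{N_{bg}} \in \mathbb{R}^d$ with labels $\mathbf{y}_i \in \mathbb{R}^m$. Define the Nadaraya–Watson regressor $\hat{y}(\mathbf{x}) = \frac{\sum_i K(\mathbf{x},\mathbf{x}_i)\mathbf{y}_i + \sum_j K(\mathbf{x},\mathbf{x}'_j)T(\mathbf{x}'_j)}{\sum_i K(\mathbf{x},\mathbf{x}_i) + \sum_j K(\mathbf{x},\mathbf{x}'_j)}$ (assume the denominator is positive, which holds since kernels are strictly positive and $N_p \ge 1$). Let $\varepsilon = \max_i K(\mathbf{x},\mathbf{x}_i)$ and $\sigma_p^2 = \frac{1}{N_p}\sum_{j=1}^{N_p}\|\mathbf{x}-\mathbf{x}'_j\|_2^2$.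 Assume (i) $\|\mathbf{y}_i - T(\mathbf{x})\|_2 \le M$ for all $i$, and (ii) $\|T(\mathbf{u}) - T(\mathbf{v})\|_2 \le L_T \|\mathbf{u}-\mathbf{v}\|_2$ for all $\mathbf{u},\mathbf{v}$ among $\{\mathbf{x}\} \cup \{\mathbf{x}'_j\}$. Then $\|\hat{y}(\mathbf{x}) - T(\mathbf{x})\|_2 \le \frac{N_{bg}\,M\,\varepsilon}{N_p \exp(-\gamma\,\sigma_p^2)} + L_T\,\sigma_p$, where $\sigma_p = \sqrt{\sigma_p^2}$. -/
open Finset Real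

set_option maxHeartbeats 1000000 in
theorem tsf_backdoor_success_bound
    (d m Nbg Np : ℕ) (hNp : 1 ≤ Np)
    (γ : ℝ) (hγ : 0 < γ)
    (x : EuclideanSpace ℝ (Fin d))
    (xp : Fin Np → EuclideanSpace ℝ (Fin d))
    (xb : Fin Nbg → EuclideanSpace ℝ (Fin d))
    (T : EuclideanSpace ℝ (Fin d) → EuclideanSpace ℝ (Fin m))
    (y : Fin Nbg → EuclideanSpace ℝ (Fin m))
    (K : EuclideanSpace ℝ (Fin d) → EuclideanSpace ℝ (Fin d) → ℝ)
    (hK : ∀ u v, K u v = Real.exp (-γ * ‖u - v‖ ^ 2))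
    (yhat : EuclideanSpace ℝ (Fin m))
    (hyhat : yhat = ((∑ i, K x (xb i)) + ∑ j, K x (xp j))⁻¹ •
        ((∑ i, K x (xb i) • y i) + ∑ j, K x (xp j) • T (xp j)))
    (ε : ℝ) (hε : ε = ⨆ i, K x (xb i))
    (σp2 : ℝ) (hσp2 : σp2 = (1 / (Np : ℝ)) * ∑ j, ‖x - xp j‖ ^ 2)
    (M : ℝ) (hM : ∀ i, ‖y i - T x‖ ≤ M)
    (LT : ℝ)
    (hLip : ∀ u ∈ {x} ∪ Set.range xp, ∀ v ∈ {x} ∪ Set.range xp,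
        ‖T u - T v‖ ≤ LT * ‖u - v‖) :
    ‖yhat - T x‖ ≤ (Nbg : ℝ) * M * ε / ((Np : ℝ) * Real.exp (-γ * σp2))
      + LT * Real.sqrt σp2 := by
  have hNp0 : (0:ℝ) < Np := by exact_mod_cast hNp
  have hne : Nonempty (Fin Np) := ⟨⟨0, hNp⟩⟩
  set Kb : Fin Nbg → ℝ := fun i => K x (xb i) with hKbdef
  set Kp : Fin Np → ℝ := fun j => K x (xp j) with hKpdef
  set dj : Fin Np → ℝ := fun j => ‖x - xp j‖ with hdjdef
  have hKbpos : ∀ i, 0 < Kb i := fun i => by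
    show 0 < K x (xb i); rw [hK]; exact Real.exp_pos _
  have hKppos : ∀ j, 0 < Kp j := fun j => by
    show 0 < K x (xp j); rw [hK]; exact Real.exp_pos _
  have hdj0 : ∀ j, 0 ≤ dj j := fun j => norm_nonneg _
  set Sb : ℝ := ∑ i, Kb i with hSbdef
  set Sp : ℝ := ∑ j, Kp j with hSpdef
  have hSb : 0 ≤ Sb := Finset.sum_nonneg fun i _ => (hKbpos i).le
  have hSp : 0 < Sp := Finset.sum_pos (fun j _ => hKppos j) Finset.univ_nonempty
  have hS : 0 < Sb + Sp := by linarith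
  have hσ2d : σp2 = (1/(Np:ℝ)) * ∑ j, dj j ^ 2 := hσp2
  have hσp2nn : 0 ≤ σp2 := by
    rw [hσ2d]; positivity
  -- Jensen: Np * exp (-γ σp2) ≤ Sp
  have jensen : (Np:ℝ) * Real.exp (-γ * σp2) ≤ Sp := by
    have h := convexOn_exp.map_sum_le (t := Finset.univ)
      (w := fun _ : Fin Np => (1:ℝ)/Np) (p := fun j => -γ * dj j ^ 2)
      (fun _ _ => by positivity)
      (by rw [Finset.sum_const, Finset.card_univ, Fintype.card_fin, nsmul_eq_mul]; field_simp)
      (fun _ _ => Set.mem_univ _)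
    simp only [smul_eq_mul] at h
    have e1 : (∑ j : Fin Np, (1:ℝ)/Np * (-γ * dj j ^ 2)) = -γ * σp2 := by
      rw [hσ2d, Finset.mul_sum, Finset.mul_sum]
      exact Finset.sum_congr rfl fun j _ => by ring
    have e2 : (∑ j : Fin Np, (1:ℝ)/Np * Real.exp (-γ * dj j ^ 2)) = (1/(Np:ℝ)) * Sp := by
      rw [← Finset.mul_sum]
      congr 1
      exact Finset.sum_congr rfl fun j _ => by
        show Real.exp (-γ * ‖x - xp j‖ ^ 2) = K x (xp j)
        rw [hK]
    rw [e1, e2] at h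
    have := mul_le_mul_of_nonneg_left h hNp0.le
    calc (Np:ℝ) * Real.exp (-γ * σp2) ≤ (Np:ℝ) * ((1/(Np:ℝ)) * Sp) := this
      _ = Sp := by field_simp
  have hNexp : 0 < (Np:ℝ) * Real.exp (-γ * σp2) := by positivity
  -- decomposition
  have hinner : ((∑ i, K x (xb i) • y i) + ∑ j, K x (xp j) • T (xp j)) - (Sb + Sp) • T x
      = (∑ i, Kb i • (y i - T x)) + ∑ j, Kp j • (T (xp j) - T x) := by
    show _ = (∑ i, K x (xb i) • (y i - T x)) + ∑ j, K x (xp j) • (T (xp j) - T x)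
    rw [hSbdef, hSpdef]
    show _ - ((∑ i, K x (xb i)) + ∑ j, K x (xp j)) • T x = _
    simp only [smul_sub, Finset.sum_sub_distrib, add_smul, Finset.sum_smul]
    abel
  have key : yhat - T x = (Sb + Sp)⁻¹ •
      ((∑ i, Kb i • (y i - T x)) + ∑ j, Kp j • (T (xp j) - T x)) := by
    rw [← hinner, smul_sub, inv_smul_smul₀ hS.ne', hyhat]
  have hb1 : ‖∑ i, Kb i • (y i - T x)‖ ≤ ∑ i, Kb i * ‖y i - T x‖ := by
    refine (norm_sum_le _ _).trans_eq ?_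
    refine Finset.sum_congr rfl fun i _ => ?_
    rw [norm_smul, Real.norm_eq_abs, abs_of_pos (hKbpos i)]
  have hb2 : ‖∑ j, Kp j • (T (xp j) - T x)‖ ≤ ∑ j, Kp j * ‖T (xp j) - T x‖ := by
    refine (norm_sum_le _ _).trans_eq ?_
    refine Finset.sum_congr rfl fun j _ => ?_
    rw [norm_smul, Real.norm_eq_abs, abs_of_pos (hKppos j)]
  have hnorm : ‖yhat - T x‖ ≤ (Sb + Sp)⁻¹ *
      ((∑ i, Kb i * ‖y i - T x‖) + ∑ j, Kp j * ‖T (xp j) - T x‖) := by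
    rw [key, norm_smul, norm_inv, Real.norm_eq_abs, abs_of_pos hS]
    refine mul_le_mul_of_nonneg_left ?_ (inv_nonneg.2 hS.le)
    exact (norm_add_le _ _).trans (add_le_add hb1 hb2)
  -- term 1
  have hεge : ∀ i, Kb i ≤ ε := fun i =>
    hε ▸ le_ciSup (Set.Finite.bddAbove (Set.finite_range _)) i
  have t1 : (Sb + Sp)⁻¹ * (∑ i, Kb i * ‖y i - T x‖) ≤
      (Nbg : ℝ) * M * ε / ((Np : ℝ) * Real.exp (-γ * σp2)) := by
    rcases Nat.eq_zero_or_pos Nbg with h0 | hpos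
    · subst h0; simp
    · have hM0 : 0 ≤ M := le_trans (norm_nonneg _) (hM ⟨0, hpos⟩)
      have hε0 : 0 < ε := lt_of_lt_of_le (hKbpos ⟨0, hpos⟩) (hεge _)
      have hsum : (∑ i, Kb i * ‖y i - T x‖) ≤ (Nbg : ℝ) * (M * ε) := by
        calc (∑ i, Kb i * ‖y i - T x‖) ≤ ∑ _i : Fin Nbg, M * ε := by
              refine Finset.sum_le_sum fun i _ => ?_
              rw [mul_comm M ε]
              exact mul_le_mul (hεge i) (hM i) (norm_nonneg _) hε0.le
          _ = (Nbg : ℝ) * (M * ε) := by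
              rw [Finset.sum_const, Finset.card_univ, Fintype.card_fin, nsmul_eq_mul]
      calc (Sb + Sp)⁻¹ * (∑ i, Kb i * ‖y i - T x‖)
          ≤ ((Np:ℝ) * Real.exp (-γ * σp2))⁻¹ * ((Nbg : ℝ) * (M * ε)) := by
            refine mul_le_mul ?_ hsum (Finset.sum_nonneg fun i _ =>
              mul_nonneg (hKbpos i).le (norm_nonneg _)) (inv_nonneg.2 hNexp.le)
            exact inv_anti₀ hNexp (le_trans jensen (by linarith))
        _ = (Nbg : ℝ) * M * ε / ((Np : ℝ) * Real.exp (-γ * σp2)) := by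
            rw [div_eq_inv_mul]; ring
  -- term 2
  have hLipj : ∀ j, ‖T (xp j) - T x‖ ≤ LT * dj j := fun j => by
    have h := hLip (xp j) (Or.inr ⟨j, rfl⟩) x (Or.inl rfl)
    show ‖T (xp j) - T x‖ ≤ LT * ‖x - xp j‖
    rw [norm_sub_rev x (xp j)]
    exact h
  have t2 : (Sb + Sp)⁻¹ * (∑ j, Kp j * ‖T (xp j) - T x‖) ≤ LT * Real.sqrt σp2 := by
    by_cases hLT : 0 ≤ LT
    · have cheb : Antivary Kp dj := by
        intro i j hij
        have hsq : dj i ^ 2 ≤ dj j ^ 2 := pow_le_pow_left₀ (hdj0 i) hij.le 2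
        have hsq' : ‖x - xp i‖ ^ 2 ≤ ‖x - xp j‖ ^ 2 := hsq
        show K x (xp j) ≤ K x (xp i)
        rw [hK, hK]
        exact Real.exp_le_exp.2 (by nlinarith)
      have cheb2 : (Np:ℝ) * ∑ j, Kp j * dj j ≤ Sp * ∑ j, dj j := by
        have := cheb.card_mul_sum_le_sum_mul_sum
        simpa using this
      have cs : (∑ j, dj j) ^ 2 ≤ (Np:ℝ) * ∑ j, dj j ^ 2 := by
        have := sq_sum_le_card_mul_sum_sq (s := Finset.univ) (f := dj)
        simpa using this
      have hdsum0 : 0 ≤ ∑ j, dj j := Finset.sum_nonneg fun j _ => hdj0 j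
      have hmean : (∑ j, dj j) / (Np:ℝ) ≤ Real.sqrt σp2 := by
        rw [Real.le_sqrt (by positivity) hσp2nn]
        calc ((∑ j, dj j) / (Np:ℝ)) ^ 2 = (∑ j, dj j) ^ 2 / (Np:ℝ) ^ 2 := by rw [div_pow]
          _ ≤ ((Np:ℝ) * ∑ j, dj j ^ 2) / (Np:ℝ) ^ 2 := by gcongr
          _ = σp2 := by rw [hσ2d]; field_simp
      have hKd0 : 0 ≤ ∑ j, Kp j * dj j :=
        Finset.sum_nonneg fun j _ => mul_nonneg (hKppos j).le (hdj0 j)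
      have hsum2 : (∑ j, Kp j * ‖T (xp j) - T x‖) ≤ LT * ∑ j, Kp j * dj j := by
        rw [Finset.mul_sum]
        refine Finset.sum_le_sum fun j _ => ?_
        rw [← mul_assoc, mul_comm LT (Kp j), mul_assoc]
        exact mul_le_mul_of_nonneg_left (hLipj j) (hKppos j).le
      have h2 : (Sb + Sp)⁻¹ * (∑ j, Kp j * dj j) ≤ (∑ j, dj j) / (Np:ℝ) := by
        calc (Sb + Sp)⁻¹ * (∑ j, Kp j * dj j)
            ≤ Sp⁻¹ * (∑ j, Kp j * dj j) :=
              mul_le_mul_of_nonneg_right (inv_anti₀ hSp (by linarith)) hKd0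
          _ ≤ (∑ j, dj j) / (Np:ℝ) := by
              rw [inv_mul_le_iff₀ hSp, ← mul_div_assoc, le_div_iff₀ hNp0]
              linarith [cheb2]
      calc (Sb + Sp)⁻¹ * (∑ j, Kp j * ‖T (xp j) - T x‖)
          ≤ (Sb + Sp)⁻¹ * (LT * ∑ j, Kp j * dj j) :=
            mul_le_mul_of_nonneg_left hsum2 (inv_nonneg.2 hS.le)
        _ = LT * ((Sb + Sp)⁻¹ * ∑ j, Kp j * dj j) := by ring
        _ ≤ LT * ((∑ j, dj j) / (Np:ℝ)) := mul_le_mul_of_nonneg_left h2 hLT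
        _ ≤ LT * Real.sqrt σp2 := mul_le_mul_of_nonneg_left hmean hLT
    · push_neg at hLT
      have hdz : ∀ j, dj j = 0 := fun j => by
        have h1 := hLipj j
        have h2 : LT * dj j ≤ 0 := mul_nonpos_of_nonpos_of_nonneg hLT.le (hdj0 j)
        nlinarith [hdj0 j, norm_nonneg (T (xp j) - T x)]
      have hsz : σp2 = 0 := by
        rw [hσ2d]
        simp [hdz]
      have hz : (∑ j, Kp j * ‖T (xp j) - T x‖) = 0 := by
        refine Finset.sum_eq_zero fun j _ => ?_
        have h3 : ‖T (xp j) - T x‖ = 0 := by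
          have h1 := hLipj j
          rw [hdz j, mul_zero] at h1
          exact le_antisymm h1 (norm_nonneg _)
        rw [h3, mul_zero]
      rw [hz, hsz, Real.sqrt_zero, mul_zero, mul_zero]
  calc ‖yhat - T x‖ ≤ (Sb + Sp)⁻¹ *
      ((∑ i, Kb i * ‖y i - T x‖) + ∑ j, Kp j * ‖T (xp j) - T x‖) := hnorm
    _ = (Sb + Sp)⁻¹ * (∑ i, Kb i * ‖y i - T x‖)
        + (Sb + Sp)⁻¹ * (∑ j, Kp j * ‖T (xp j) - T x‖) := by ring
    _ ≤ _ := add_le_add t1 t2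
end

section
/- In the setting of the TSF Backdoor Success Bound, if the background term vanishes ($N_{bg} = 0$) then $\|\hat{y}(\mathbf{x}) - T(\mathbf{x})\|_2 \le L_T\,\sigma_p(\mathbf{x})$, i.e., the prediction error at a triggered input is bounded solely by the Lipschitz constant of the target mapping times the root-mean-square distance of the poisoned inputs from the trigger. -/
open Finset Real

theorem tsf_backdoor_bound_no_background
    (d m Np : ℕ) (hNp : 1 ≤ Np) (γ : ℝ) (hγ : 0 < γ)
    (x : EuclideanSpace ℝ (Fin d)) (xp : Fin Np → EuclideanSpace ℝ (Fin d))
    (T : EuclideanSpace ℝ (Fin d) → EuclideanSpace ℝ (Fin m))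
    (K : EuclideanSpace ℝ (Fin d) → EuclideanSpace ℝ (Fin d) → ℝ)
    (hK : ∀ u v, K u v = Real.exp (-γ * ‖u - v‖ ^ 2))
    (yhat : EuclideanSpace ℝ (Fin m))
    (hyhat : yhat = (∑ j, K x (xp j))⁻¹ • ∑ j, K x (xp j) • T (xp j))
    (σp2 : ℝ) (hσp2 : σp2 = (1 / (Np : ℝ)) * ∑ j, ‖x - xp j‖ ^ 2)
    (LT : ℝ)
    (hLip : ∀ u ∈ {x} ∪ Set.range xp, ∀ v ∈ {x} ∪ Set.range xp,
        ‖T u - T v‖ ≤ LT * ‖u - v‖) :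
    ‖yhat - T x‖ ≤ LT * Real.sqrt σp2 := by
  have hNp0 : (0 : ℝ) < (Np : ℝ) := by exact_mod_cast hNp
  set w : Fin Np → ℝ := fun j => K x (xp j) with hw
  set D : Fin Np → ℝ := fun j => ‖x - xp j‖ with hD
  have hwpos : ∀ j, 0 < w j := fun j => by
    rw [hw]; simp only [hK]; exact Real.exp_pos _
  have hDnn : ∀ j, 0 ≤ D j := fun j => norm_nonneg _
  have hS : 0 < ∑ j, w j :=
    Finset.sum_pos (fun j _ => hwpos j) (by
      have : Nonempty (Fin Np) := ⟨⟨0, hNp⟩⟩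
      exact Finset.univ_nonempty)
  set S := ∑ j, w j with hSdef
  -- Lipschitz bound on each term
  have hTj : ∀ j, ‖T (xp j) - T x‖ ≤ LT * D j := by
    intro j
    have h1 : xp j ∈ ({x} : Set _) ∪ Set.range xp := Or.inr ⟨j, rfl⟩
    have h2 : x ∈ ({x} : Set _) ∪ Set.range xp := Or.inl rfl
    have := hLip (xp j) h1 x h2
    rwa [show ‖xp j - x‖ = D j from (norm_sub_rev _ _)] at this
  -- rewrite yhat - T x
  have hdiff : yhat - T x = S⁻¹ • ∑ j, w j • (T (xp j) - T x) := by
    rw [hyhat]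
    have : T x = S⁻¹ • (S • T x) := by
      rw [smul_smul, inv_mul_cancel₀ hS.ne', one_smul]
    conv_lhs => rw [this]
    rw [← smul_sub]
    congr 1
    rw [hSdef, Finset.sum_smul, ← Finset.sum_sub_distrib]
    exact Finset.sum_congr rfl fun j _ => (smul_sub _ _ _).symm
  -- norm bound
  have hnorm : ‖yhat - T x‖ ≤ S⁻¹ * ∑ j, w j * (LT * D j) := by
    rw [hdiff, norm_smul, Real.norm_eq_abs, abs_of_pos (inv_pos.2 hS)]
    refine mul_le_mul_of_nonneg_left ?_ (inv_pos.2 hS).le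
    refine (norm_sum_le _ _).trans (Finset.sum_le_sum fun j _ => ?_)
    rw [norm_smul, Real.norm_eq_abs, abs_of_pos (hwpos j)]
    exact mul_le_mul_of_nonneg_left (hTj j) (hwpos j).le
  -- case on sign of LT
  rcases lt_or_ge LT 0 with hLT | hLT
  · -- all xp j = x
    have hall : ∀ j, T (xp j) - T x = 0 := by
      intro j
      have h := hTj j
      have hD0 : D j = 0 := by
        by_contra h0
        have : 0 < D j := lt_of_le_of_ne (hDnn j) (Ne.symm h0)
        nlinarith [norm_nonneg (T (xp j) - T x)]
      have h0 : ‖T (xp j) - T x‖ ≤ 0 := by rw [hD0] at h; simpa using h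
      simpa using le_antisymm h0 (norm_nonneg _)
    have hσ0 : σp2 = 0 := by
      rw [hσp2]
      have : ∀ j ∈ Finset.univ, ‖x - xp j‖ ^ 2 = (0:ℝ) := by
        intro j _
        have h := hTj j
        have hD0 : D j = 0 := by
          by_contra h0
          have : 0 < D j := lt_of_le_of_ne (hDnn j) (Ne.symm h0)
          nlinarith [norm_nonneg (T (xp j) - T x)]
        simp [hD] at hD0
        simp [hD0]
      rw [Finset.sum_congr rfl this]
      simp
    have : yhat - T x = 0 := by
      rw [hdiff]
      rw [Finset.sum_congr rfl fun j _ => by rw [hall j, smul_zero]]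
      simp
    rw [this, hσ0]
    simp
  · -- main case
    have key : S⁻¹ * ∑ j, w j * D j ≤ Real.sqrt σp2 := by
      have hσnn : 0 ≤ σp2 := by
        rw [hσp2]
        exact mul_nonneg (by positivity) (Finset.sum_nonneg fun j _ => sq_nonneg _)
      have hAnn : 0 ≤ S⁻¹ * ∑ j, w j * D j :=
        mul_nonneg (inv_pos.2 hS).le
          (Finset.sum_nonneg fun j _ => mul_nonneg (hwpos j).le (hDnn j))
      rw [← Real.sqrt_sq hAnn]
      apply Real.sqrt_le_sqrt
      have cs : (∑ j, w j * D j) ^ 2 ≤ S * ∑ j, w j * D j ^ 2 := by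
        refine sum_sq_le_sum_mul_sum_of_sq_eq_mul _ (f := w)
          (g := fun j => w j * D j ^ 2) (fun j _ => (hwpos j).le)
          (fun j _ => mul_nonneg (hwpos j).le (sq_nonneg _)) (fun j _ => ?_)
        ring
      have cheb : (Np : ℝ) * ∑ j, w j * D j ^ 2 ≤ (∑ j, D j ^ 2) * S := by
        have hanti : Antivary (fun j => D j ^ 2) w := by
          intro i j hij
          rw [hw] at hij
          simp only [hK] at hij
          have := (Real.exp_lt_exp.mp hij)
          have h2 : ‖x - xp j‖ ^ 2 < ‖x - xp i‖ ^ 2 := by nlinarith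
          rw [hD]; exact h2.le
        have h := hanti.card_mul_sum_le_sum_mul_sum
        have e1 : ∑ i, D i ^ 2 * w i = ∑ j, w j * D j ^ 2 :=
          Finset.sum_congr rfl fun j _ => mul_comm _ _
        rw [Fintype.card_fin, e1] at h
        exact h
      have hS2 : (0:ℝ) < S ^ 2 := pow_pos hS 2
      have hB : ∑ j, w j * D j ^ 2 ≤ 1/(Np:ℝ) * ((∑ j, D j ^ 2) * S) := by
        rw [one_div, inv_mul_eq_div, le_div_iff₀ hNp0, mul_comm]
        exact cheb
      rw [hσp2, mul_pow, inv_pow, inv_mul_eq_div, div_le_iff₀ hS2]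
      calc (∑ j, w j * D j) ^ 2 ≤ S * ∑ j, w j * D j ^ 2 := cs
        _ ≤ S * (1/(Np:ℝ) * ((∑ j, D j ^ 2) * S)) :=
            mul_le_mul_of_nonneg_left hB hS.le
        _ = (1 / (Np:ℝ) * ∑ j, ‖x - xp j‖ ^ 2) * S ^ 2 := by
            simp only [hD]; ring
    calc ‖yhat - T x‖ ≤ S⁻¹ * ∑ j, w j * (LT * D j) := hnorm
      _ = LT * (S⁻¹ * ∑ j, w j * D j) := by
          rw [Finset.mul_sum, Finset.mul_sum, Finset.mul_sum]
          exact Finset.sum_congr rfl fun j _ => by ring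
      _ ≤ LT * Real.sqrt σp2 := by
          exact mul_le_mul_of_nonneg_left key hLT
end
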